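/- arXiv:1701.05980 — 3 statements merged into one kernel-verified Lean document; each statement's English description precedes it below -/
import Mathlib

section
/- Let p be prime, e a divisor of p-1, and n an integer with p ∤ n. Then (φ(e)/e) · Σ_{d ∣ e} (μ(d)/φ(d)) · Σ_{χ of order d mod p} χ(n) equals 1 if n is e-free modulo p, and 0 otherwise. -/
/-!
Put `a = n mod p` and `k = (p - 1) / ord(a)`. For `d ∣ p - 1`, orthogonality of characters gives
`∑_{χ^d = 1} χ(a) = d` or `0` according as `a` is a `d`-th power or not, and since `(ZMod p)ˣ` is
cyclic of order `p - 1`, `a` is a `d`-th power exactly when `d ∣ k`. The weights satisfy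
`φ(e)/e · μ(o)/φ(o) = ∑_{o ∣ d ∣ e} μ(d)/d`, so grouping the characters of order `o ∣ d` together
turns the left side into `∑_{d ∣ gcd(e, k)} μ(d)`, which is `1` iff `gcd(e, k) = 1`, i.e. iff `a`
is `e`-free.
-/

open Finset ArithmeticFunction UniqueFactorizationMonoid
open scoped ArithmeticFunction.Moebius Nat

theorem ArithmeticFunction.IsMultiplicative.prodPrimeFactors_one_sub {R : Type*} [CommRing R]
    {f : ArithmeticFunction R} (hf : f.IsMultiplicative) {n : ℕ} (hn : n ≠ 0) :
    ∏ p ∈ n.primeFactors, (1 - f p) = ∑ d ∈ n.divisors, μ d * f d := by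
  have hrad : (radical n).primeFactors = n.primeFactors := by
    simpa only [primeFactors_eq_natPrimeFactors] using primeFactors_radical (a := n)
  rw [← hrad, hf.prodPrimeFactors_one_sub_of_squarefree _ squarefree_radical]
  refine sum_subset (Nat.divisors_subset_of_dvd hn radical_dvd_self) fun d hd hdr => ?_
  have : ¬ Squarefree d := fun hsq => hdr <| Nat.mem_divisors.mpr
    ⟨(dvd_radical_iff hsq.isRadical hn).mpr (Nat.dvd_of_mem_divisors hd), radical_ne_zero⟩
  simp [moebius_eq_zero_of_not_squarefree this]

theorem Nat.sum_divisors_filter_dvd_eq_sum_divisors_div {M : Type*} [AddCommMonoid M]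
    (F : ℕ → M) {n o : ℕ} (hn : n ≠ 0) (ho : o ∣ n) :
    ∑ d ∈ n.divisors with o ∣ d, F d = ∑ k ∈ (n / o).divisors, F (o * k) := by
  have ho0 : o ≠ 0 := ne_zero_of_dvd_ne_zero hn ho
  rw [← sum_image (g := (o * ·))
    fun _ _ _ _ h => Nat.eq_of_mul_eq_mul_left (Nat.pos_of_ne_zero ho0) h]
  congr 1
  ext d
  simp only [mem_filter, Nat.mem_divisors, mem_image]
  constructor
  · rintro ⟨⟨hdn, -⟩, k, rfl⟩
    exact ⟨k, ⟨Nat.dvd_div_of_mul_dvd hdn, Nat.div_ne_zero_iff_of_dvd ho |>.mpr ⟨hn, ho0⟩⟩, rfl⟩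
  · rintro ⟨k, ⟨hk, -⟩, rfl⟩
    exact ⟨⟨Nat.mul_dvd_of_dvd_div ho hk, hn⟩, dvd_mul_right o k⟩

noncomputable def ArithmeticFunction.coprimeInv (K : Type*) [DivisionRing K] (o : ℕ) :
    ArithmeticFunction K :=
  ⟨fun k => if k.Coprime o then (k : K)⁻¹ else 0, by simp⟩

theorem ArithmeticFunction.coprimeInv_apply (K : Type*) [DivisionRing K] (o k : ℕ) :
    coprimeInv K o k = if k.Coprime o then (k : K)⁻¹ else 0 := rfl

theorem ArithmeticFunction.isMultiplicative_coprimeInv (K : Type*) [Field K] (o : ℕ) :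
    (coprimeInv K o).IsMultiplicative := by
  refine ⟨by simp [coprimeInv_apply], fun {m n} _ => ?_⟩
  simp only [coprimeInv_apply, Nat.coprime_mul_iff_left, Nat.cast_mul, mul_inv,
    ite_zero_mul_ite_zero]

variable {K : Type*} [Field K]

theorem Nat.cast_totient_div_self [CharZero K] {n : ℕ} (hn : n ≠ 0) :
    (φ n : K) / n = ∏ q ∈ n.primeFactors, (1 - (q : K)⁻¹) := by
  rw [div_eq_iff (Nat.cast_ne_zero.mpr hn), mul_comm]
  have h := congrArg (Rat.cast : ℚ → K) (Nat.totient_eq_mul_prod_factors n)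
  push_cast at h
  exact h

theorem Nat.cast_totient_div_self_eq_mul_prod [CharZero K] {e o : ℕ} (he : e ≠ 0) (ho : o ∣ e) :
    (φ e : K) / e = φ o / o * ∏ q ∈ e.primeFactors with ¬ q ∣ o, (1 - (q : K)⁻¹) := by
  rw [cast_totient_div_self he, cast_totient_div_self (ne_zero_of_dvd_ne_zero he ho),
    ← primeFactors_filter_dvd_of_dvd he ho, prod_filter_mul_prod_filter_not]

theorem ArithmeticFunction.moebius_mul_div_eq_mul_coprimeInv (o k : ℕ) :
    (μ (o * k) : K) / (o * k : ℕ) = μ o / o * (μ k * coprimeInv K o k) := by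
  by_cases hk : k.Coprime o
  · rw [coprimeInv_apply, if_pos hk, isMultiplicative_moebius.map_mul_of_coprime hk.symm]
    push_cast
    ring
  · have : ¬ Squarefree (o * k) := fun h => hk (Nat.squarefree_mul_iff.mp h).1.symm
    simp [coprimeInv_apply, hk, moebius_eq_zero_of_not_squarefree this]

theorem ArithmeticFunction.sum_divisors_div_moebius_mul_coprimeInv {e o : ℕ} (he : e ≠ 0)
    (ho : o ∣ e) :
    ∑ k ∈ (e / o).divisors, (μ k : K) * coprimeInv K o k
      = ∑ k ∈ e.divisors, (μ k : K) * coprimeInv K o k := by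
  refine sum_subset (Nat.divisors_subset_of_dvd he (Nat.div_dvd_of_dvd ho)) fun k hk hko => ?_
  have hk : ¬ k.Coprime o := fun hc => hko <| Nat.mem_divisors.mpr
    ⟨hc.dvd_of_dvd_mul_right (by rw [Nat.div_mul_cancel ho]; exact Nat.dvd_of_mem_divisors hk),
      Nat.div_ne_zero_iff_of_dvd ho |>.mpr ⟨he, ne_zero_of_dvd_ne_zero he ho⟩⟩
  simp [coprimeInv_apply, hk]

theorem ArithmeticFunction.sum_divisors_filter_dvd_moebius_div [CharZero K] {e o : ℕ}
    (he : e ≠ 0) (ho : o ∣ e) :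
    ∑ d ∈ e.divisors with o ∣ d, (μ d : K) / d = φ e / e * (μ o / φ o) := by
  have hφ : (φ o : K) ≠ 0 := by
    exact_mod_cast (Nat.totient_pos.mpr (Nat.pos_of_ne_zero (ne_zero_of_dvd_ne_zero he ho))).ne'
  have hprod : ∏ q ∈ e.primeFactors, (1 - coprimeInv K o q)
      = ∏ q ∈ e.primeFactors with ¬ q ∣ o, (1 - (q : K)⁻¹) := by
    rw [prod_filter]
    refine prod_congr rfl fun q hq => ?_
    simp only [coprimeInv_apply, (Nat.prime_of_mem_primeFactors hq).coprime_iff_not_dvd]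
    split_ifs <;> simp
  rw [Nat.sum_divisors_filter_dvd_eq_sum_divisors_div _ he ho]
  simp_rw [moebius_mul_div_eq_mul_coprimeInv]
  rw [← mul_sum, sum_divisors_div_moebius_mul_coprimeInv he ho,
    ← (isMultiplicative_coprimeInv K o).prodPrimeFactors_one_sub he, hprod,
    Nat.cast_totient_div_self_eq_mul_prod he ho]
  field_simp

theorem ArithmeticFunction.totient_div_mul_sum_moebius_div_totient [CharZero K] {e : ℕ}
    (he : e ≠ 0) (S : ℕ → K) :
    (φ e : K) / e * ∑ d ∈ e.divisors, (μ d : K) / φ d * S d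
      = ∑ d' ∈ e.divisors, (μ d' : K) / d' * ∑ d ∈ d'.divisors, S d := by
  calc _ = ∑ d ∈ e.divisors, ∑ d' ∈ e.divisors with d ∣ d', (μ d' : K) / d' * S d := by
        rw [mul_sum]
        refine sum_congr rfl fun d hd => ?_
        rw [← mul_assoc, ← sum_divisors_filter_dvd_moebius_div he (Nat.dvd_of_mem_divisors hd),
          sum_mul]
    _ = _ := by
        simp only [mul_sum]
        refine sum_comm' fun d d' => ?_
        simp only [mem_filter, Nat.mem_divisors]
        exact ⟨fun ⟨_, ⟨hd'e, _⟩, hdd'⟩ => ⟨⟨hdd', ne_zero_of_dvd_ne_zero he hd'e⟩, hd'e, he⟩,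
          fun ⟨⟨hdd', _⟩, hd'e, _⟩ => ⟨⟨hdd'.trans hd'e, he⟩, ⟨hd'e, he⟩, hdd'⟩⟩

theorem ArithmeticFunction.sum_moebius_common_divisors {e : ℕ} (he : e ≠ 0) (k : ℕ) :
    ∑ d ∈ e.divisors with d ∣ k, μ d = if e.Coprime k then 1 else 0 := by
  have : {d ∈ e.divisors | d ∣ k} = (e.gcd k).divisors := by
    ext d
    simp [Nat.dvd_gcd_iff, he]
  rw [this, ← coe_mul_zeta_apply, moebius_mul_coe_zeta, one_apply]

theorem FiniteField.exists_isPrimitiveRoot_of_dvd {F : Type*} [Field F] [Fintype F] {d : ℕ}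
    (hd : d ∣ Fintype.card F - 1) : ∃ z : F, IsPrimitiveRoot z d := by
  classical
  obtain ⟨g, hg⟩ := isCyclic_iff_exists_orderOf_eq_natCard.mp (inferInstance : IsCyclic Fˣ)
  rw [Nat.card_eq_fintype_card, Fintype.card_units, ← orderOf_units] at hg
  obtain ⟨k, hk⟩ := hd
  refine ⟨(g : F) ^ k, (IsPrimitiveRoot.orderOf (g : F)).pow ?_ (by rw [hg, hk, mul_comm])⟩
  rw [hg]
  have := Fintype.one_lt_card (α := F)
  omega

theorem IsPrimitiveRoot.card_filter_pow_eq {R : Type*} [CommRing R] [IsDomain R] [Fintype R]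
    [DecidableEq R] {z : R} {d : ℕ} (hz : IsPrimitiveRoot z d) (hd : d ≠ 0) {b : R} (hb : b ≠ 0) :
    #{y : R | y ^ d = b} = if ∃ y, y ^ d = b then d else 0 := by
  have : ({y : R | y ^ d = b} : Finset R) = Polynomial.nthRootsFinset d b := by
    ext y
    simp [Polynomial.mem_nthRootsFinset (Nat.pos_of_ne_zero hd)]
  rw [this, Polynomial.nthRootsFinset_def, Multiset.toFinset_card_of_nodup (hz.nthRoots_nodup hb),
    hz.card_nthRoots]
  congr 1

theorem IsCyclic.exists_pow_eq_iff_dvd {G : Type*} [Group G] [Finite G] [IsCyclic G] {d : ℕ}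
    (hd : d ∣ Nat.card G) (u : G) : (∃ y : G, y ^ d = u) ↔ d ∣ Nat.card G / orderOf u := by
  constructor
  · rintro ⟨y, rfl⟩
    have h : orderOf (y ^ d) ∣ Nat.card G / d := orderOf_dvd_of_pow_eq_one <| by
      rw [← pow_mul, Nat.mul_div_cancel' hd, pow_card_eq_one']
    exact Nat.dvd_div_of_mul_dvd (by rw [mul_comm]; exact Nat.mul_dvd_of_dvd_div hd h)
  · intro h
    obtain ⟨g, hg⟩ := IsCyclic.exists_generator (α := G)
    obtain ⟨s, rfl⟩ := mem_powers_iff_mem_zpowers.mpr (hg u)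
    rw [orderOf_pow, orderOf_eq_card_of_forall_mem_zpowers hg,
      Nat.div_div_self (Nat.gcd_dvd_left _ _) Nat.card_pos.ne'] at h
    obtain ⟨t, rfl⟩ := h.trans (Nat.gcd_dvd_right _ _)
    exact ⟨g ^ t, by rw [← pow_mul, mul_comm]⟩

theorem FiniteField.exists_pow_eq_iff_dvd {F : Type*} [Field F] [Fintype F] {d : ℕ}
    (hd : d ∣ Fintype.card F - 1) {b : F} (hb : b ≠ 0) :
    (∃ y : F, y ^ d = b) ↔ d ∣ (Fintype.card F - 1) / orderOf b := by
  classical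
  have hd0 : d ≠ 0 := by
    rintro rfl
    have := Fintype.one_lt_card (α := F)
    omega
  have hcard : Nat.card Fˣ = Fintype.card F - 1 := by
    rw [Nat.card_eq_fintype_card, Fintype.card_units]
  have hunits : (∃ y : F, y ^ d = b) ↔ ∃ y : Fˣ, y ^ d = Units.mk0 b hb :=
    ⟨fun ⟨y, hy⟩ => ⟨Units.mk0 y (ne_zero_pow hd0 (hy ▸ hb)), Units.ext (by simpa using hy)⟩,
      fun ⟨y, hy⟩ => ⟨y, by simpa using congrArg Units.val hy⟩⟩
  rw [hunits, IsCyclic.exists_pow_eq_iff_dvd (hcard ▸ hd), hcard, ← orderOf_units, Units.val_mk0]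

namespace DirichletCharacter

variable {p : ℕ} [Fact p.Prime]

open scoped Classical in
theorem sum_filter_pow_eq_one_eq_card {d : ℕ} (hd : d ≠ 0) {b : ZMod p} (hb : b ≠ 0) :
    ∑ χ : DirichletCharacter ℂ p with χ ^ d = 1, χ b = #{y : ZMod p | y ^ d = b} := by
  have hφ : (p.totient : ℂ) ≠ 0 := by
    exact_mod_cast (Nat.totient_pos.mpr (Fact.out : p.Prime).pos).ne'
  have hχ (χ : DirichletCharacter ℂ p) :
      ∑ y : ZMod p, χ (y ^ d)⁻¹ = if χ ^ d = 1 then (p.totient : ℂ) else 0 := by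
    rw [← Equiv.sum_comp (Equiv.inv (ZMod p)) (fun y => χ (y ^ d)⁻¹)]
    simp only [Equiv.inv_apply, inv_pow, inv_inv, map_pow, ← MulChar.pow_apply' χ hd]
    split_ifs with h
    · rw [h, MulChar.sum_one_eq_card_units, ZMod.card_units_eq_totient]
    · exact MulChar.sum_eq_zero_of_ne_one h
  have hy (y : ZMod p) : ∑ χ : DirichletCharacter ℂ p, χ (y ^ d)⁻¹ * χ b
      = if y ^ d = b then (p.totient : ℂ) else 0 := by
    rcases eq_or_ne y 0 with rfl | hy
    · simp [zero_pow hd, hb.symm, MulChar.map_zero]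
    · exact sum_char_inv_mul_char_eq ℂ (pow_ne_zero d hy).isUnit b
  apply mul_left_cancel₀ hφ
  calc (p.totient : ℂ) * ∑ χ : DirichletCharacter ℂ p with χ ^ d = 1, χ b
      = ∑ χ : DirichletCharacter ℂ p, (∑ y : ZMod p, χ (y ^ d)⁻¹) * χ b := by
        simp only [hχ, ite_mul, zero_mul, ← sum_filter, mul_sum]
    _ = ∑ y : ZMod p, ∑ χ : DirichletCharacter ℂ p, χ (y ^ d)⁻¹ * χ b := by
        simp only [sum_mul]
        exact sum_comm
    _ = (p.totient : ℂ) * #{y : ZMod p | y ^ d = b} := by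
        rw [sum_congr rfl fun y _ => hy y, ← sum_filter, sum_const, nsmul_eq_mul, mul_comm]

open scoped Classical in
theorem sum_filter_pow_eq_one {d : ℕ} (hd : d ∣ p - 1) {b : ZMod p} (hb : b ≠ 0) :
    ∑ χ : DirichletCharacter ℂ p with χ ^ d = 1, χ b
      = if ∃ y : ZMod p, y ^ d = b then (d : ℂ) else 0 := by
  have hd0 : d ≠ 0 := by
    rintro rfl
    have := (Fact.out : p.Prime).two_le
    omega
  rw [← ZMod.card p] at hd
  obtain ⟨z, hz⟩ := FiniteField.exists_isPrimitiveRoot_of_dvd hd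
  rw [sum_filter_pow_eq_one_eq_card hd0 hb, hz.card_filter_pow_eq hd0 hb]
  split_ifs <;> simp

end DirichletCharacter

theorem sum_divisors_sum_filter_orderOf_eq {G M : Type*} [Monoid G] [Fintype G]
    [DecidableEq G] [AddCommMonoid M] (f : G → M) {n : ℕ} (hn : n ≠ 0) :
    ∑ d ∈ n.divisors, ∑ g : G with orderOf g = d, f g = ∑ g : G with g ^ n = 1, f g := by
  rw [← sum_fiberwise_of_maps_to (g := orderOf) (t := n.divisors)
    fun g hg => Nat.mem_divisors.mpr ⟨orderOf_dvd_of_pow_eq_one (mem_filter.mp hg).2, hn⟩]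
  refine sum_congr rfl fun d hd => ?_
  rw [filter_filter]
  refine sum_congr (filter_congr fun g _ => ?_) fun _ _ => rfl
  exact ⟨fun h => ⟨orderOf_dvd_iff_pow_eq_one.mp (h ▸ Nat.dvd_of_mem_divisors hd), h⟩, And.right⟩

open scoped Classical in
theorem stmt_6 (p : ℕ) [Fact p.Prime] (e : ℕ) (he : e ∣ p - 1) (n : ℤ)
    (hn : ¬ (p : ℤ) ∣ n) :
    ((Nat.totient e : ℂ) / (e : ℂ)) *
      ∑ d ∈ e.divisors, ((ArithmeticFunction.moebius d : ℂ) / (Nat.totient d : ℂ)) *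
        ∑ χ ∈ univ.filter (fun χ : DirichletCharacter ℂ p => orderOf χ = d), χ (n : ZMod p)
      = if (∀ d, d ∣ e → 1 < d → ¬ ∃ y : ZMod p, y ^ d = (n : ZMod p)) then 1 else 0 := by
  have he0 : e ≠ 0 := by
    rintro rfl
    have := (Fact.out : p.Prime).two_le
    omega
  set a : ZMod p := (n : ZMod p)
  have ha : a ≠ 0 := fun h => hn ((ZMod.intCast_zmod_eq_zero_iff_dvd n p).mp h)
  set k := (p - 1) / orderOf a
  have hres (d : ℕ) (hd : d ∣ e) : (∃ y : ZMod p, y ^ d = a) ↔ d ∣ k := by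
    simpa only [ZMod.card] using
      FiniteField.exists_pow_eq_iff_dvd (by rw [ZMod.card]; exact hd.trans he) ha
  have hfree : (∀ d, d ∣ e → 1 < d → ¬ ∃ y : ZMod p, y ^ d = a) ↔ e.Coprime k := by
    refine ⟨fun H => Nat.coprime_of_dvd fun q hq hqe hqk => ?_, fun hc d hde hd hy => ?_⟩
    · exact H q hqe hq.one_lt ((hres q hqe).mpr hqk)
    · exact hd.ne' (Nat.eq_one_of_dvd_coprimes hc hde ((hres d hde).mp hy))
  calc _ = ∑ d' ∈ e.divisors, (μ d' : ℂ) / d' *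
          ∑ d ∈ d'.divisors, ∑ χ : DirichletCharacter ℂ p with orderOf χ = d, χ a :=
        totient_div_mul_sum_moebius_div_totient he0 _
    _ = ∑ d' ∈ e.divisors, (μ d' : ℂ) / d' * if d' ∣ k then (d' : ℂ) else 0 := by
        refine sum_congr rfl fun d hd => ?_
        have hde := Nat.dvd_of_mem_divisors hd
        rw [sum_divisors_sum_filter_orderOf_eq _ (Nat.ne_of_gt (Nat.pos_of_mem_divisors hd)),
          DirichletCharacter.sum_filter_pow_eq_one (hde.trans he) ha, if_congr (hres d hde) rfl rfl]
    _ = ((∑ d ∈ e.divisors with d ∣ k, μ d : ℤ) : ℂ) := by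
        rw [Int.cast_sum, sum_filter]
        refine sum_congr rfl fun d hd => ?_
        have : (d : ℂ) ≠ 0 := Nat.cast_ne_zero.mpr (Nat.ne_of_gt (Nat.pos_of_mem_divisors hd))
        split_ifs <;> simp [this]
    _ = _ := by
        rw [sum_moebius_common_divisors he0, if_congr hfree rfl rfl]
        split_ifs <;> simp
end

section
/- Let g be a primitive root modulo prime p, and let χ be a Dirichlet character modulo p of order d ∣ p-1. For n with index v = ind_g(n), the sum over all characters of order d modulo p satisfies Σ_{χ ∈ Γ_d} χ(n) = μ(d/m) · φ(d)/φ(d/m), where m = gcd(d, v). -/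
/-!
Evaluation at a generator `u` of `(ZMod p)ˣ` identifies the characters of order `d` with the
primitive `d`-th roots of unity, so the sum is the Ramanujan sum `∑ ζ ^ v` over primitive
`d`-th roots `ζ`. Writing these roots as `ζ ^ k` with `k ∈ (ZMod d)ˣ`, the map `z ↦ z ^ v`
becomes the reduction `(ZMod d)ˣ → (ZMod (d / m))ˣ`, a surjective homomorphism with fibres of
size `φ d / φ (d / m)`; and the primitive `e`-th roots of unity sum to `μ e`, by Möbius
inversion of `∑_{z ^ e = 1} z = [e = 1]`.
-/

open Finset

theorem mem_zpowers_of_orderOf_eq_card {G : Type*} [Group G] [Finite G] {u : G}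
    (hu : orderOf u = Nat.card G) (x : G) : x ∈ Subgroup.zpowers u :=
  (Subgroup.eq_top_of_card_eq (Subgroup.zpowers u) (by rwa [Nat.card_zpowers])) ▸
    Subgroup.mem_top x

theorem MonoidHom.sum_comp_of_surjective {G H M : Type*} [Group G] [Fintype G] [Group H]
    [Fintype H] [DecidableEq H] [AddCommMonoid M] (f : G →* H) (hf : Function.Surjective f)
    (F : H → M) :
    ∑ x, F (f x) = (Fintype.card G / Fintype.card H) • ∑ y, F y := by
  have hfiber : ∀ y, #{x | f x = y} = #{x | f x = 1} := fun y =>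
    MonoidHom.card_fiber_eq_of_mem_range f (hf y) (hf 1)
  have hcard : Fintype.card G = Fintype.card H * #{x | f x = 1} := by
    rw [← card_univ, card_eq_sum_card_fiberwise (f := f) (t := univ) fun _ _ => mem_univ _]
    simp [hfiber]
  rw [hcard, Nat.mul_div_cancel_left _ Fintype.card_pos, ← sum_fiberwise univ f, smul_sum]
  refine sum_congr rfl fun y _ => ?_
  rw [sum_congr rfl fun x hx => by rw [(mem_filter.1 hx).2], sum_const, hfiber]

namespace IsPrimitiveRoot

theorem pow_div_gcd {M : Type*} [CommMonoid M] {ζ : M} {n : ℕ} (hζ : IsPrimitiveRoot ζ n)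
    (hn : n ≠ 0) (v : ℕ) : IsPrimitiveRoot (ζ ^ v) (n / n.gcd v) := by
  have := IsPrimitiveRoot.orderOf (ζ ^ v)
  rwa [IsOfFinOrder.orderOf_pow _ _ (hζ.isOfFinOrder hn), ← hζ.eq_orderOf] at this

variable {R : Type*} [CommRing R] [IsDomain R] {ζ : R} {n : ℕ}

theorem sum_nthRootsFinset_one_eq_zero [DecidableEq R] (hζ : IsPrimitiveRoot ζ n)
    (hn : 1 < n) : ∑ z ∈ Polynomial.nthRootsFinset n (1 : R), z = 0 := by
  have hinj : Set.InjOn (ζ ^ ·) (range n) := fun i hi j hj h =>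
    hζ.pow_inj (mem_range.1 hi) (mem_range.1 hj) h
  have himage : (range n).image (ζ ^ ·) = Polynomial.nthRootsFinset n (1 : R) := by
    refine eq_of_subset_of_card_le (fun z hz => ?_) ?_
    · obtain ⟨i, -, rfl⟩ := mem_image.1 hz
      rw [Polynomial.mem_nthRootsFinset (by omega), ← pow_mul, mul_comm, pow_mul,
        hζ.pow_eq_one, one_pow]
    · rw [card_image_of_injOn hinj, card_range, hζ.card_nthRootsFinset]
  rw [← himage, sum_image hinj, hζ.geom_sum_eq_zero hn]

theorem sum_primitiveRoots_eq_moebius (hζ : IsPrimitiveRoot ζ n) (hn : 0 < n) :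
    ∑ z ∈ primitiveRoots n R, z = ArithmeticFunction.moebius n := by
  classical
  have hdivisors : ∀ e > 0, e ∈ {e | e ∣ n} →
      ∑ i ∈ e.divisors, ∑ z ∈ primitiveRoots i R, z = if e = 1 then 1 else 0 := by
    intro e he hen
    split_ifs with he1
    · simp [he1]
    · rw [← sum_biUnion fun i _ j _ hij => IsPrimitiveRoot.disjoint hij,
        ← nthRoots_one_eq_biUnion_primitiveRoots]
      exact (hζ.pow hn (Nat.div_mul_cancel hen).symm).sum_nthRootsFinset_one_eq_zero (by omega)
  rw [← (ArithmeticFunction.sum_eq_iff_sum_smul_moebius_eq_on {e | e ∣ n}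
    fun _ _ hab hb => hab.trans hb).1 hdivisors n hn dvd_rfl, sum_eq_single (n, 1)]
  · simp
  · rintro ⟨a, b⟩ hab hne
    have hb : b ≠ 1 := by
      rintro rfl
      exact hne (by simp_all [Nat.mem_divisorsAntidiagonal])
    simp [hb]
  · simp [hn.ne']

theorem sum_primitiveRoots_eq_sum_units [NeZero n] {M : Type*} [AddCommMonoid M]
    (hζ : IsPrimitiveRoot ζ n) (f : R → M) :
    ∑ z ∈ primitiveRoots n R, f z = ∑ k : (ZMod n)ˣ, f (ζ ^ (k : ZMod n).val) := by
  symm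
  refine sum_bij (fun k _ => ζ ^ (k : ZMod n).val) (fun k _ => ?_) (fun k _ l _ h => ?_)
    (fun z hz => ?_) fun _ _ => rfl
  · exact (mem_primitiveRoots (NeZero.pos n)).2
      (hζ.pow_of_coprime _ (ZMod.val_coe_unit_coprime k))
  · exact Units.ext (ZMod.val_injective n (hζ.pow_inj (ZMod.val_lt _) (ZMod.val_lt _) h))
  · have hz' := (mem_primitiveRoots (NeZero.pos n)).1 hz
    obtain ⟨i, hi, rfl⟩ := hζ.eq_pow_of_pow_eq_one hz'.pow_eq_one
    have hcop : i.Coprime n := (hζ.pow_iff_coprime (NeZero.pos n) i).1 hz'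
    refine ⟨ZMod.unitOfCoprime i hcop, mem_univ _, ?_⟩
    simp [ZMod.val_natCast, Nat.mod_eq_of_lt hi]

-- The division is exact: `φ (n / n.gcd v) ∣ φ n`.
theorem sum_primitiveRoots_pow [NeZero n] (hζ : IsPrimitiveRoot ζ n) (v : ℕ) :
    ∑ z ∈ primitiveRoots n R, z ^ v =
      (n.totient / (n / n.gcd v).totient) • (ArithmeticFunction.moebius (n / n.gcd v) : R) := by
  set e := n / n.gcd v
  have hen : e ∣ n := Nat.div_dvd_of_dvd (Nat.gcd_dvd_left n v)
  have : NeZero e := ⟨fun h => NeZero.ne n (Nat.eq_zero_of_zero_dvd (h ▸ hen))⟩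
  have hη : IsPrimitiveRoot (ζ ^ v) e := hζ.pow_div_gcd (NeZero.ne n) v
  calc ∑ z ∈ primitiveRoots n R, z ^ v
      = ∑ k : (ZMod n)ˣ, (ζ ^ v) ^ (ZMod.unitsMap hen k : ZMod e).val := by
        rw [hζ.sum_primitiveRoots_eq_sum_units]
        refine sum_congr rfl fun k _ => ?_
        rw [ZMod.unitsMap_val, ZMod.cast_eq_val, ZMod.val_natCast, ← pow_mul, mul_comm,
          pow_mul, hη.eq_orderOf, pow_mod_orderOf]
    _ = (n.totient / e.totient) • ∑ z ∈ primitiveRoots e R, z := by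
        rw [MonoidHom.sum_comp_of_surjective _ (ZMod.unitsMap_surjective hen)
            fun j : (ZMod e)ˣ => (ζ ^ v) ^ (j : ZMod e).val,
          ZMod.card_units_eq_totient, ZMod.card_units_eq_totient,
          hη.sum_primitiveRoots_eq_sum_units]
    _ = _ := by rw [hη.sum_primitiveRoots_eq_moebius (NeZero.pos e)]

end IsPrimitiveRoot

namespace MulChar

variable {M : Type*} [CommMonoid M] {u : Mˣ}

theorem orderOf_apply_of_forall_mem_zpowers {R : Type*} [CommMonoidWithZero R]
    (hu : ∀ x, x ∈ Subgroup.zpowers u) (χ : MulChar M R) : orderOf (χ u) = orderOf χ :=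
  orderOf_eq_orderOf_iff.2 fun n => by rw [eq_iff hu (χ ^ n) 1, pow_apply_coe, one_apply_coe]

theorem sum_filter_orderOf_eq [Fintype M] [DecidableEq M] {R : Type*} [CommRing R] [IsDomain R]
    [Fintype (MulChar M R)] {S : Type*} [AddCommMonoid S] (hu : ∀ x, x ∈ Subgroup.zpowers u)
    {d : ℕ} (hd : d ∣ Fintype.card Mˣ) (f : R → S) :
    ∑ χ ∈ univ.filter (fun χ : MulChar M R => orderOf χ = d), f (χ u) =
      ∑ z ∈ primitiveRoots d R, f z := by
  have hd0 : 0 < d := Nat.pos_of_dvd_of_pos hd Fintype.card_pos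
  refine sum_nbij (fun χ => χ u) (fun χ hχ => ?_) (fun χ₁ _ χ₂ _ h => (eq_iff hu χ₁ χ₂).2 h)
    (fun z hz => ?_) fun _ _ => rfl
  · rw [mem_primitiveRoots hd0, ← (mem_filter.1 hχ).2, ← orderOf_apply_of_forall_mem_zpowers hu]
    exact IsPrimitiveRoot.orderOf _
  · have hz' := (mem_primitiveRoots hd0).1 hz
    have : NeZero (Fintype.card Mˣ) := ⟨Fintype.card_ne_zero⟩
    let w := rootsOfUnity.mkOfPowEq z ((hz'.pow_eq_one_iff_dvd _).2 hd)
    have hχ := ofRootOfUnity_spec w.prop hu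
    refine ⟨ofRootOfUnity w.prop hu, mem_filter.2 ⟨mem_univ _, ?_⟩, ?_⟩
    · rw [← orderOf_apply_of_forall_mem_zpowers hu, hχ]
      exact hz'.eq_orderOf.symm
    · exact hχ.trans (rootsOfUnity.coe_mkOfPowEq _)

end MulChar

theorem stmt_7 (p : ℕ) [Fact p.Prime] (g : ZMod p) (hg : orderOf g = p - 1)
    (d : ℕ) (hd : d ∣ p - 1) (v : ℕ) (m : ℕ) (hm : m = Nat.gcd d v) :
    (∑ χ ∈ univ.filter (fun χ : DirichletCharacter ℂ p => orderOf χ = d), χ (g ^ v))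
      = (ArithmeticFunction.moebius (d / m) : ℂ) *
          (Nat.totient d : ℂ) / (Nat.totient (d / m) : ℂ) := by
  have hp : 0 < p - 1 := Nat.sub_pos_of_lt (Fact.out : p.Prime).one_lt
  have : NeZero d := ⟨by rintro rfl; omega⟩
  have hgu : IsUnit g := IsUnit.of_pow_eq_one (hg ▸ pow_orderOf_eq_one g) hp.ne'
  have hu : ∀ x, x ∈ Subgroup.zpowers hgu.unit := mem_zpowers_of_orderOf_eq_card <| by
    rw [← orderOf_units, hgu.unit_spec, hg, Nat.card_eq_fintype_card, ZMod.card_units]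
  have hcard : d ∣ Fintype.card (ZMod p)ˣ := by rwa [ZMod.card_units]
  have hζ := Complex.isPrimitiveRoot_exp d (NeZero.ne d)
  subst hm
  calc ∑ χ ∈ univ.filter (fun χ : DirichletCharacter ℂ p => orderOf χ = d), χ (g ^ v)
      = ∑ χ ∈ univ.filter (fun χ : DirichletCharacter ℂ p => orderOf χ = d), χ hgu.unit ^ v := by
        simp [map_pow]
    _ = ∑ z ∈ primitiveRoots d ℂ, z ^ v := MulChar.sum_filter_orderOf_eq hu hcard _
    _ = _ := by
        have he : 0 < d / d.gcd v := Nat.div_pos (Nat.gcd_le_left v (NeZero.pos d))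
          (Nat.gcd_pos_of_pos_left v (NeZero.pos d))
        rw [hζ.sum_primitiveRoots_pow v, nsmul_eq_mul, Nat.cast_div (Nat.totient_dvd_of_dvd
          (Nat.div_dvd_of_dvd (Nat.gcd_dvd_left d v))) (by simpa using he.ne')]
        ring
end

section
/- Let p be prime and suppose Rad(p-1) = k·p₁⋯p_s where p₁,…,p_s are distinct primes not dividing k and k ∣ Rad(p-1). For x < p, let N_e(x) denote the number of positive integers n ≤ x that are squarefree and e-free modulo p, and let N(x) denote the number of squarefree primitive roots modulo p in [1,x]. Then N(x) ≥ Σ_{i=1}^{s} N_{kp_i}(x) − (s−1)·N_k(x). -/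
open Finset

lemma aux_pow_residue (p : ℕ) [Fact p.Prime] (q : ℕ) (hq : q.Prime) (hqd : q ∣ p - 1)
    (a : ZMod p) (ha : a ≠ 0) (h : a ^ ((p - 1) / q) = 1) : ∃ y : ZMod p, y ^ q = a := by
  have hp : p.Prime := Fact.out
  obtain ⟨u, hu⟩ := isUnit_iff_ne_zero.mpr ha
  obtain ⟨g, hg⟩ := IsCyclic.exists_generator (α := (ZMod p)ˣ)
  have hog : orderOf g = p - 1 := by
    rw [orderOf_eq_card_of_forall_mem_zpowers hg, Nat.card_eq_fintype_card, ZMod.card_units]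
  obtain ⟨t, ht'⟩ := hg u
  have ht : g ^ t = u := ht'
  set m := (p - 1) / q with hm
  have hqm : q * m = p - 1 := Nat.mul_div_cancel' hqd
  have hm0 : m ≠ 0 := by
    intro h0
    have := hp.one_lt
    simp [h0] at hqm
    omega
  have hu1 : u ^ m = 1 := by
    ext
    push_cast [hu]
    exact h
  have h2 : g ^ (t * (m : ℤ)) = 1 := by
    rw [zpow_mul, ht, zpow_natCast, hu1]
  have h3 : ((p - 1 : ℕ) : ℤ) ∣ t * m := by
    rw [← hog]
    exact orderOf_dvd_iff_zpow_eq_one.mpr h2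
  have h4 : (q : ℤ) ∣ t := by
    have : ((q : ℤ) * m) ∣ t * m := by
      rw [← Nat.cast_mul, hqm]; exact h3
    have hm0' : (m : ℤ) ≠ 0 := by exact_mod_cast hm0
    exact (mul_dvd_mul_iff_right hm0').mp this
  obtain ⟨r, hr⟩ := h4
  refine ⟨(g ^ r : (ZMod p)ˣ), ?_⟩
  have hgr : ((g ^ r) ^ (q : ℕ) : (ZMod p)ˣ) = u := by
    rw [← zpow_natCast, ← zpow_mul, mul_comm, ← hr, ht]
  calc ((g ^ r : (ZMod p)ˣ) : ZMod p) ^ q = (((g ^ r) ^ (q:ℕ) : (ZMod p)ˣ) : ZMod p) := by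
        push_cast; ring
    _ = a := by rw [hgr, hu]

lemma aux_bonferroni {α : Type*} [DecidableEq α] (s : ℕ) (T C : Finset α)
    (B : Fin s → Finset α) (hBC : ∀ i, B i ⊆ C)
    (hint : ∀ n ∈ C, (∀ i, n ∈ B i) → n ∈ T) :
    (T.card : ℤ) ≥ (∑ i, ((B i).card : ℤ)) - ((s : ℤ) - 1) * C.card := by
  classical
  set I := C.filter (fun n => ∀ i, n ∈ B i) with hI
  have hIC : I ⊆ C := Finset.filter_subset _ _
  have hIT : I ⊆ T := by
    intro n hn
    rw [hI, Finset.mem_filter] at hn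
    exact hint n hn.1 hn.2
  have hcover : C \ I ⊆ Finset.univ.biUnion (fun i => C \ B i) := by
    intro n hn
    rw [Finset.mem_sdiff] at hn
    obtain ⟨hnC, hnI⟩ := hn
    rw [hI, Finset.mem_filter] at hnI
    push_neg at hnI
    obtain ⟨i, hi⟩ := hnI hnC
    rw [Finset.mem_biUnion]
    exact ⟨i, Finset.mem_univ i, Finset.mem_sdiff.mpr ⟨hnC, hi⟩⟩
  have hcard1 : (C \ I).card ≤ ∑ i, (C \ B i).card :=
    le_trans (Finset.card_le_card hcover) (Finset.card_biUnion_le)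
  have hmain : (C.card : ℤ) - I.card ≤ (s : ℤ) * C.card - ∑ i, ((B i).card : ℤ) := by
    have e1 : ((C \ I).card : ℤ) = C.card - I.card := by
      rw [Finset.card_sdiff_of_subset hIC, Nat.cast_sub (Finset.card_le_card hIC)]
    have e2 : ∀ i, ((C \ B i).card : ℤ) = C.card - (B i).card := by
      intro i
      rw [Finset.card_sdiff_of_subset (hBC i), Nat.cast_sub (Finset.card_le_card (hBC i))]
    have h5 : ((C \ I).card : ℤ) ≤ ∑ i, ((C \ B i).card : ℤ) := by
      exact_mod_cast hcard1
    rw [e1] at h5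
    calc (C.card : ℤ) - I.card ≤ ∑ i, ((C \ B i).card : ℤ) := h5
      _ = ∑ i : Fin s, ((C.card : ℤ) - (B i).card) := Finset.sum_congr rfl (fun i _ => e2 i)
      _ = (s : ℤ) * C.card - ∑ i, ((B i).card : ℤ) := by
          rw [Finset.sum_sub_distrib, Finset.sum_const, Finset.card_univ, Fintype.card_fin,
            nsmul_eq_mul]
  have hTI : (I.card : ℤ) ≤ T.card := by exact_mod_cast Finset.card_le_card hIT
  linarith

open scoped Classical in
theorem stmt_13 (p : ℕ) [Fact p.Prime] (k s : ℕ) (hs : 1 ≤ s) (pr : Fin s → ℕ)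
    (hpr : ∀ i, (pr i).Prime) (hinj : Function.Injective pr)
    (hnd : ∀ i, ¬ pr i ∣ k) (hk : k ∣ (p - 1).primeFactors.prod id)
    (hrad : (p - 1).primeFactors.prod id = k * ∏ i, pr i)
    (x : ℕ) (hx : x < p) :
    (((Finset.Icc 1 x).filter (fun n =>
        Squarefree n ∧ orderOf ((n : ZMod p)) = p - 1)).card : ℤ)
      ≥ (∑ i, (((Finset.Icc 1 x).filter (fun n => Squarefree n ∧
            ∀ d, d ∣ k * pr i → 1 < d → ¬ ∃ y : ZMod p, y ^ d = (n : ZMod p))).card : ℤ))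
        - ((s : ℤ) - 1) *
          (((Finset.Icc 1 x).filter (fun n => Squarefree n ∧
            ∀ d, d ∣ k → 1 < d → ¬ ∃ y : ZMod p, y ^ d = (n : ZMod p))).card : ℤ) := by
  have hp : p.Prime := Fact.out
  have hp1 : 0 < p - 1 := by have := hp.one_lt; omega
  apply aux_bonferroni
  · -- B i ⊆ C
    intro i n hn
    rw [Finset.mem_filter] at hn ⊢
    exact ⟨hn.1, hn.2.1, fun d hd => hn.2.2 d (hd.mul_right _)⟩
  · -- intersection lands in T
    intro n hnC hnB
    rw [Finset.mem_filter] at hnC ⊢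
    obtain ⟨hnU, hsq, _⟩ := hnC
    refine ⟨hnU, hsq, ?_⟩
    have hne : n ≠ 0 := by
      simp only [bind_pure_comp] at hnU
      simp at hnU
      obtain ⟨a, ⟨h1, h2⟩, h3⟩ := hnU
      intro h0
      rw [h0] at h3
      rw [ZMod.natCast_eq_zero_iff] at h3
      have := Nat.le_of_dvd (by omega) h3
      omega
    apply orderOf_eq_of_pow_and_pow_div_prime hp1 (ZMod.pow_card_sub_one_eq_one hne)
    intro q hq hqd heq
    have hres : ∃ y : ZMod p, y ^ q = n := aux_pow_residue p q hq hqd _ hne heq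
    have hqR : q ∣ (p - 1).primeFactors.prod id := by
      apply Finset.dvd_prod_of_mem
      exact Nat.mem_primeFactors.mpr ⟨hq, hqd, by omega⟩
    rw [hrad] at hqR
    rcases (Nat.Prime.dvd_mul hq).mp hqR with hqk | hqP
    · have hB0 := (Finset.mem_filter.mp (hnB ⟨0, hs⟩)).2.2
      exact hB0 q (hqk.mul_right _) hq.one_lt hres
    · obtain ⟨i, _, hqi⟩ := (Prime.dvd_finset_prod_iff hq.prime _).mp hqP
      have hqe : q = pr i := (Nat.prime_dvd_prime_iff_eq hq (hpr i)).mp hqi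
      have hBi := (Finset.mem_filter.mp (hnB i)).2.2
      exact hBi q (hqe ▸ Dvd.dvd.mul_left dvd_rfl k) hq.one_lt hres
end
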